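/- Let α > -1, n ≥ 2, and H = A_n²(𝔻, μ_α). Then the Berezin transform Ber_H : B(H) → L^∞(𝔻), defined by Ber_H(S)(z) = ⟨S K_z, K_z⟩ / ⟨K_z, K_z⟩ where K_z is the reproducing kernel of H at z, is not injective: there exists a nonzero bounded operator S on H with Ber_H(S) = 0. -/

import Mathlib

open MeasureTheory Finset
open scoped InnerProductSpace

/-- The open unit disk in the complex plane. -/
def unitDisk : Set ℂ := {z : ℂ | ‖z‖ < 1}

/-- The normalized weighted Lebesgue measure on the unit disk. -/
noncomputable def muAlpha (α : ℝ) : Measure ℂ :=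
  ((volume : Measure ℂ).restrict unitDisk).withDensity
    fun z => ENNReal.ofReal ((α + 1) / Real.pi * (1 - ‖z‖ ^ 2) ^ α)

/-- f is n-analytic on U. -/
def PolyAnalyticOn (n : ℕ) (f : ℂ → ℂ) (U : Set ℂ) : Prop :=
  ∃ g : ℕ → ℂ → ℂ, (∀ k < n, DifferentiableOn ℂ (g k) U) ∧
    ∀ z ∈ U, f z = ∑ k ∈ Finset.range n, g k z * (starRingEnd ℂ z) ^ k

/-- The weighted Bergman space of n-analytic functions on the unit disk,
as a closed subspace of L²(𝔻, μ_α). -/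
noncomputable def bergmanSubmodule (α : ℝ) (n : ℕ) : Submodule ℂ (Lp ℂ 2 (muAlpha α)) :=
  (Submodule.span ℂ
    {g : Lp ℂ 2 (muAlpha α) | ∃ (f : ℂ → ℂ) (_ : PolyAnalyticOn n f unitDisk)
      (hm : MemLp f 2 (muAlpha α)), g = hm.toLp f}).topologicalClosure

/-! For `n ≥ 2` both `z` and `z̄` lie in the space (they are bounded, and `μ_α` is finite because
`∫₀¹ r (1 - r²)^α dr < ∞` for `α > -1`). With `u = z`, `v = z̄` and `S = u ⊗ u - v ⊗ v`, the
reproducing property gives `⟪K_w, S K_z⟫ = z̄ w - z w̄`: this vanishes on the diagonal `w = z`,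
so the Berezin transform of `S` is zero, but not at `z = i/2`, `w = 1/2`, so `S ≠ 0`. -/

open Set InnerProductSpace

lemma unitDisk_eq_ball : unitDisk = Metric.ball 0 1 := by
  ext z
  simp [unitDisk]

lemma integrableOn_mul_one_sub_sq_rpow {α : ℝ} (hα : -1 < α) :
    IntegrableOn (fun y : ℝ => y * (1 - y ^ 2) ^ α) (Ioo 0 1) := by
  have hα' : α + 1 ≠ 0 := by linarith
  let g : ℝ → ℝ := fun y => -(1 - y ^ 2) ^ (α + 1) / (2 * (α + 1))
  have hcont : ContinuousOn g (Icc 0 1) := by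
    refine ContinuousOn.div_const (ContinuousOn.neg fun y _ => ?_) _
    exact ((continuous_const.sub (continuous_pow 2)).continuousAt.rpow_const
      (Or.inr (by linarith))).continuousWithinAt
  have hderiv : ∀ y ∈ Ioo (0 : ℝ) 1, HasDerivAt g (y * (1 - y ^ 2) ^ α) y := by
    intro y hy
    have hpos : 0 < 1 - y ^ 2 := by nlinarith [hy.1, hy.2]
    have hsq : HasDerivAt (fun y : ℝ => 1 - y ^ 2) (-(2 * y)) y := by
      simpa using (hasDerivAt_pow 2 y).const_sub 1
    refine ((hsq.rpow_const (p := α + 1) (Or.inl hpos.ne')).neg.div_const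
      (2 * (α + 1))).congr_deriv ?_
    rw [add_sub_cancel_right]
    field_simp
  refine (intervalIntegral.integrableOn_deriv_of_nonneg hcont hderiv fun y hy => ?_).mono_set
    Ioo_subset_Ioc_self
  have : 0 ≤ 1 - y ^ 2 := by nlinarith [hy.1, hy.2]
  exact mul_nonneg hy.1.le (Real.rpow_nonneg this α)

lemma isFiniteMeasure_muAlpha {α : ℝ} (hα : -1 < α) : IsFiniteMeasure (muAlpha α) := by
  have h : IntegrableOn (fun z : ℂ => (α + 1) / Real.pi * (1 - ‖z‖ ^ 2) ^ α)
      (Metric.ball 0 1) := by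
    rw [integrableOn_fun_norm_addHaar volume (f := fun r => (α + 1) / Real.pi * (1 - r ^ 2) ^ α)]
    simp only [Complex.finrank_real_complex, Nat.reduceSub, pow_one, smul_eq_mul,
      mul_left_comm _ ((α + 1) / Real.pi)]
    exact (integrableOn_mul_one_sub_sq_rpow hα).const_mul _
  rw [← unitDisk_eq_ball] at h
  exact isFiniteMeasure_withDensity_ofReal h.2

lemma ae_mem_unitDisk_muAlpha (α : ℝ) : ∀ᵐ z ∂muAlpha α, z ∈ unitDisk :=
  withDensity_absolutelyContinuous _ _ |>.ae_le <|
    ae_restrict_mem (isOpen_lt continuous_norm continuous_const).measurableSet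

lemma memLp_muAlpha_of_bound {α : ℝ} (hα : -1 < α) {f : ℂ → ℂ} (hf : Continuous f)
    {C : ℝ} (hC : ∀ z ∈ unitDisk, ‖f z‖ ≤ C) (p : ENNReal) : MemLp f p (muAlpha α) := by
  have := isFiniteMeasure_muAlpha hα
  exact .of_bound hf.aestronglyMeasurable C <| (ae_mem_unitDisk_muAlpha α).mono hC

lemma polyAnalyticOn_of_eqOn_mul_conj_pow {n k : ℕ} (hk : k < n) {f g : ℂ → ℂ} {U : Set ℂ}
    (hg : DifferentiableOn ℂ g U) (hf : ∀ z ∈ U, f z = g z * starRingEnd ℂ z ^ k) :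
    PolyAnalyticOn n f U := by
  classical
  refine ⟨fun j => if j = k then g else 0, fun j _ => ?_, fun z hz => ?_⟩
  · dsimp only
    split_ifs
    · exact hg
    · exact differentiableOn_const 0
  · rw [Finset.sum_eq_single_of_mem k (Finset.mem_range.mpr hk) fun j _ hj => by simp [hj]]
    simp [hf z hz]

lemma toLp_mem_bergmanSubmodule {α : ℝ} {n : ℕ} {f : ℂ → ℂ} (hf : PolyAnalyticOn n f unitDisk)
    (hm : MemLp f 2 (muAlpha α)) : hm.toLp f ∈ bergmanSubmodule α n :=
  Submodule.le_topologicalClosure _ (Submodule.subset_span ⟨f, hf, hm, rfl⟩)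

section Kernel

variable {E : Type*} [NormedAddCommGroup E] [InnerProductSpace ℂ E]

lemma inner_rankOne_sub_rankOne_of_reproducing {K : ℂ → E} {D : Set ℂ} {u v : E}
    (hu : ∀ z ∈ D, ⟪K z, u⟫_ℂ = z) (hv : ∀ z ∈ D, ⟪K z, v⟫_ℂ = starRingEnd ℂ z)
    {z w : ℂ} (hz : z ∈ D) (hw : w ∈ D) :
    ⟪K w, (rankOne ℂ u u - rankOne ℂ v v) (K z)⟫_ℂ
      = starRingEnd ℂ z * w - z * starRingEnd ℂ w := by
  simp only [sub_apply, rankOne_apply, inner_sub_right, inner_smul_right,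
    ← inner_conj_symm u, ← inner_conj_symm v, hu z hz, hu w hw, hv z hz,
    hv w hw, Complex.conj_conj]

end Kernel

/-- The Berezin transform on the n-analytic weighted Bergman space of the unit disk
(n ≥ 2) is not injective: there is a nonzero bounded operator whose Berezin
transform vanishes identically. -/
theorem berezin_not_injective (α : ℝ) (hα : -1 < α) (n : ℕ) (hn : 2 ≤ n)
    (K : ℂ → bergmanSubmodule α n)
    (hK : ∀ z ∈ unitDisk, ∀ f : ℂ → ℂ, PolyAnalyticOn n f unitDisk →
      ∀ hm : MemLp f 2 (muAlpha α),
        f z = ⟪((K z : bergmanSubmodule α n) : Lp ℂ 2 (muAlpha α)), hm.toLp f⟫_ℂ) :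
    ∃ S : bergmanSubmodule α n →L[ℂ] bergmanSubmodule α n, S ≠ 0 ∧
      ∀ z ∈ unitDisk,
        ⟪((K z : bergmanSubmodule α n) : Lp ℂ 2 (muAlpha α)),
          ((S (K z) : bergmanSubmodule α n) : Lp ℂ 2 (muAlpha α))⟫_ℂ = 0 := by
  have hpu : PolyAnalyticOn n (fun z => z) unitDisk :=
    polyAnalyticOn_of_eqOn_mul_conj_pow (k := 0) (by omega) differentiableOn_id (by simp)
  have hpv : PolyAnalyticOn n (starRingEnd ℂ) unitDisk :=
    polyAnalyticOn_of_eqOn_mul_conj_pow (k := 1) (by omega) (differentiableOn_const 1) (by simp)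
  have hmu := memLp_muAlpha_of_bound hα continuous_id (fun z hz => hz.le) 2
  have hmv := memLp_muAlpha_of_bound hα Complex.continuous_conj
    (fun z hz => (Complex.norm_conj z).trans_lt hz |>.le) 2
  let u : bergmanSubmodule α n := ⟨_, toLp_mem_bergmanSubmodule hpu hmu⟩
  let v : bergmanSubmodule α n := ⟨_, toLp_mem_bergmanSubmodule hpv hmv⟩
  have key {z w : ℂ} (hz : z ∈ unitDisk) (hw : w ∈ unitDisk) :=
    inner_rankOne_sub_rankOne_of_reproducing (K := K) (u := u) (v := v)
      (fun z hz => (hK z hz _ hpu hmu).symm) (fun z hz => (hK z hz _ hpv hmv).symm) hz hw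
  refine ⟨rankOne ℂ u u - rankOne ℂ v v, fun hS => ?_,
    fun z hz => by rw [← Submodule.coe_inner, key hz hz]; ring⟩
  have hw : (1 / 2 : ℂ) ∈ unitDisk := by norm_num [unitDisk]
  have hz : Complex.I / 2 ∈ unitDisk := by norm_num [unitDisk]
  have h_off_diag := key hz hw
  rw [hS] at h_off_diag
  norm_num [Complex.ext_iff, map_ofNat] at h_off_diag
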